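/- arXiv:2402.08676 — 2 statements merged into one kernel-verified Lean document; each statement's English description precedes it below -/
import Mathlib

section
/- Let K ∈ ℕ, α > 0, and let X₁, X₂, … be independent, identically distributed random K×K real matrices, almost surely bounded in norm. Let C* be a symmetric positive semidefinite K×K matrix and let (Δ_t)_{t≥1} be symmetric K×K matrices with Δ₁ = C* and, for every t ≥ 1, 0 ⪯ Δ_{t+1} ⪯ α·E[X_tᵀ Δ_t X_t] in the Löwner order. Assume the K²×K² matrix M := α·E[X₁ ⊗ X₁]ᵀ is diagonalizable over ℂ, M = U D U⁻¹ with D diagonal. Then for every t ≥ 1, ‖Δ_{t+1}‖_F ≤ ‖U‖₂ · ‖U⁻¹ vec(C*)‖₂ · ρ(M)^t, where vec(C*) stacks the columns of C* into a K²-vector, ‖·‖_F is the Frobenius norm, ‖·‖₂ the operator (spectral) norm (Euclidean norm for vectors), and ρ(M) the spectral radius of M. -/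
open MeasureTheory ProbabilityTheory Matrix Kronecker

instance matrixMeasurableSpace {m n : Type*} : MeasurableSpace (Matrix m n ℝ) :=
  (inferInstance : MeasurableSpace (m → n → ℝ))

/-- Entrywise expectation of a random matrix. -/
noncomputable def matIntegral {Ω : Type*} [MeasurableSpace Ω] (μ : Measure Ω)
    {n m : Type*} (M : Ω → Matrix n m ℝ) : Matrix n m ℝ :=
  Matrix.of fun i j => ∫ ω, M ω i j ∂μ

/-- The Frobenius norm of a real matrix. -/
noncomputable def frobNorm {n m : Type*} [Fintype n] [Fintype m] (A : Matrix n m ℝ) : ℝ :=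
  Real.sqrt (∑ i, ∑ j, A i j ^ 2)

/-- The operator (spectral) norm of a complex matrix, acting on Euclidean space. -/
noncomputable def specNorm {n : Type*} [Fintype n] [DecidableEq n] (U : Matrix n n ℂ) : ℝ :=
  ‖Matrix.toEuclideanCLM (𝕜 := ℂ) U‖

/-- The Euclidean norm of a complex vector. -/
noncomputable def l2Norm {n : Type*} [Fintype n] (v : n → ℂ) : ℝ :=
  Real.sqrt (∑ i, ‖v i‖ ^ 2)

/-- The column-stacking vectorization of a `K×K` matrix, indexed by pairs `(j,i) ↦ X i j`,
here with complex entries so that it can be multiplied by the eigenvector matrix `U⁻¹`. -/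
def vecC {K : ℕ} (X : Matrix (Fin K) (Fin K) ℝ) : Fin K × Fin K → ℂ :=
  fun p => (X p.2 p.1 : ℂ)

/-! ### Auxiliary lemmas -/

section PSD

lemma psd_smul' {n : Type*} [Fintype n] {A : Matrix n n ℝ} (hA : A.PosSemidef) {a : ℝ}
    (ha : 0 ≤ a) : (a • A).PosSemidef := by
  refine Matrix.PosSemidef.of_dotProduct_mulVec_nonneg ?_ ?_
  · show (a • A)ᴴ = a • A
    rw [Matrix.conjTranspose_smul, star_trivial, hA.1]
  · intro x
    rw [smul_mulVec, dotProduct_smul]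
    exact smul_nonneg ha (hA.dotProduct_mulVec_nonneg x)

lemma psd_add' {n : Type*} [Fintype n] {A B : Matrix n n ℝ} (hA : A.PosSemidef)
    (hB : B.PosSemidef) : (A + B).PosSemidef := by
  refine Matrix.PosSemidef.of_dotProduct_mulVec_nonneg (hA.1.add hB.1) fun x => ?_
  rw [Matrix.add_mulVec, dotProduct_add]
  exact add_nonneg (hA.dotProduct_mulVec_nonneg x) (hB.dotProduct_mulVec_nonneg x)

lemma frob_sq_eq_trace {n : Type*} [Fintype n] (A : Matrix n n ℝ) :
    (∑ i, ∑ j, A i j ^ 2) = (Aᵀ * A).trace := by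
  rw [Matrix.trace]
  simp only [Matrix.diag_apply, Matrix.mul_apply, Matrix.transpose_apply]
  rw [Finset.sum_comm]
  simp [sq]

lemma psd_trace_nonneg' {n : Type*} [Fintype n] [DecidableEq n] {M : Matrix n n ℝ}
    (hM : M.PosSemidef) : 0 ≤ M.trace := by
  refine Finset.sum_nonneg fun i _ => ?_
  have := hM.dotProduct_mulVec_nonneg (Pi.single i 1)
  simpa using this

lemma trace_mul_psd_nonneg' {n : Type*} [Fintype n] [DecidableEq n] {A B : Matrix n n ℝ}
    (hA : A.PosSemidef) (hB : B.PosSemidef) : 0 ≤ (A * B).trace := by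
  obtain ⟨C, rfl⟩ : ∃ C : Matrix n n ℝ, A = Cᴴ * C := by
    open scoped MatrixOrder Matrix.Norms.L2Operator in
    obtain ⟨C, hC⟩ := CStarAlgebra.nonneg_iff_eq_star_mul_self.mp hA.nonneg
    exact ⟨C, by simpa [Matrix.star_eq_conjTranspose] using hC⟩
  rw [Matrix.mul_assoc, Matrix.trace_mul_comm]
  exact psd_trace_nonneg' (hB.mul_mul_conjTranspose_same C)

lemma frob_mono {n : Type*} [Fintype n] [DecidableEq n] {Y Z : Matrix n n ℝ}
    (hY : Y.PosSemidef) (hYZ : (Z - Y).PosSemidef) : frobNorm Y ≤ frobNorm Z := by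
  have hZ : Z.PosSemidef := by
    have h := psd_add' hYZ hY
    rwa [sub_add_cancel] at h
  have hYsym : Yᵀ = Y := by rw [← Matrix.conjTranspose_eq_transpose_of_trivial]; exact hY.1
  have hZsym : Zᵀ = Z := by rw [← Matrix.conjTranspose_eq_transpose_of_trivial]; exact hZ.1
  have h1 : 0 ≤ (Y * (Z - Y)).trace := trace_mul_psd_nonneg' hY hYZ
  have h2 : 0 ≤ ((Z - Y) * Z).trace := trace_mul_psd_nonneg' hYZ hZ
  have e1 : (Y * (Z - Y)).trace = (Y * Z).trace - (Y * Y).trace := by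
    rw [Matrix.mul_sub, Matrix.trace_sub]
  have e2 : ((Z - Y) * Z).trace = (Z * Z).trace - (Y * Z).trace := by
    rw [Matrix.sub_mul, Matrix.trace_sub]
  refine Real.sqrt_le_sqrt ?_
  rw [frob_sq_eq_trace, frob_sq_eq_trace, hYsym, hZsym]
  linarith

lemma frob_eq_l2_vecC {K : ℕ} (A : Matrix (Fin K) (Fin K) ℝ) :
    frobNorm A = l2Norm (vecC A) := by
  unfold frobNorm l2Norm vecC
  congr 1
  rw [Fintype.sum_prod_type]
  rw [Finset.sum_comm]
  simp [Complex.norm_real, sq_abs]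

end PSD

section L2

lemma l2Norm_eq_norm {n : Type*} [Fintype n] (v : n → ℂ) :
    l2Norm v = ‖(WithLp.equiv 2 (n → ℂ)).symm v‖ := by
  rw [EuclideanSpace.norm_eq]
  rfl

lemma l2Norm_nonneg {n : Type*} [Fintype n] (v : n → ℂ) : 0 ≤ l2Norm v := Real.sqrt_nonneg _

lemma l2_mulVec_le {n : Type*} [Fintype n] [DecidableEq n] (U : Matrix n n ℂ) (v : n → ℂ) :
    l2Norm (U *ᵥ v) ≤ specNorm U * l2Norm v := by
  rw [l2Norm_eq_norm, l2Norm_eq_norm]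
  have h : (WithLp.equiv 2 (n → ℂ)).symm (U *ᵥ v)
      = Matrix.toEuclideanCLM (𝕜 := ℂ) U ((WithLp.equiv 2 (n → ℂ)).symm v) := by
    rfl
  rw [h]
  exact (Matrix.toEuclideanCLM (𝕜 := ℂ) U).le_opNorm _

lemma l2_diag_le {n : Type*} [Fintype n] (d : n → ℂ) (r : ℝ) (hr : 0 ≤ r)
    (hd : ∀ p, ‖d p‖ ≤ r) (v : n → ℂ) :
    l2Norm (fun p => d p * v p) ≤ r * l2Norm v := by
  unfold l2Norm
  rw [← Real.sqrt_sq hr, ← Real.sqrt_mul (sq_nonneg r)]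
  refine Real.sqrt_le_sqrt ?_
  rw [Finset.mul_sum]
  refine Finset.sum_le_sum fun p _ => ?_
  rw [norm_mul, mul_pow]
  exact mul_le_mul_of_nonneg_right (pow_le_pow_left₀ (norm_nonneg _) (hd p) 2) (sq_nonneg _)

end L2

section MT

set_option linter.unusedSectionVars false

variable {Ω : Type*} [MeasurableSpace Ω] {μ : Measure Ω} [IsProbabilityMeasure μ] {K : ℕ}

lemma meas_entry {X : Ω → Matrix (Fin K) (Fin K) ℝ} (hX : Measurable X) (i j : Fin K) :
    Measurable fun ω => X ω i j :=
  (measurable_pi_apply j).comp ((measurable_pi_apply i).comp hX)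

lemma integrable_entry_prod {X : Ω → Matrix (Fin K) (Fin K) ℝ} (hX : Measurable X)
    {Cb : ℝ} (hbdd : ∀ᵐ ω ∂μ, ∀ a b, |X ω a b| ≤ Cb) (c : ℝ) (k i l j : Fin K) :
    Integrable (fun ω => X ω k i * c * X ω l j) μ := by
  have hm : Measurable fun ω => X ω k i * c * X ω l j :=
    ((meas_entry hX k i).mul_const c).mul (meas_entry hX l j)
  refine (integrable_const (Cb * |c| * Cb)).mono' hm.aestronglyMeasurable ?_
  filter_upwards [hbdd] with ω hω
  have hCb : 0 ≤ Cb := le_trans (abs_nonneg _) (hω k i)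
  have habs : |X ω k i * c * X ω l j| = |X ω k i| * |c| * |X ω l j| := by
    rw [abs_mul, abs_mul]
  rw [Real.norm_eq_abs, habs]
  exact mul_le_mul (mul_le_mul_of_nonneg_right (hω k i) (abs_nonneg c)) (hω l j)
    (abs_nonneg _) (mul_nonneg hCb (abs_nonneg c))

lemma quad_entry (Xm B : Matrix (Fin K) (Fin K) ℝ) (i j : Fin K) :
    (Xmᵀ * B * Xm) i j = ∑ l, ∑ k, Xm k i * B k l * Xm l j := by
  simp only [Matrix.mul_apply, Matrix.transpose_apply, Finset.sum_mul]

lemma integrable_quad {X : Ω → Matrix (Fin K) (Fin K) ℝ} (hX : Measurable X)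
    {Cb : ℝ} (hbdd : ∀ᵐ ω ∂μ, ∀ a b, |X ω a b| ≤ Cb) (B : Matrix (Fin K) (Fin K) ℝ)
    (i j : Fin K) : Integrable (fun ω => ((X ω)ᵀ * B * X ω) i j) μ := by
  simp only [quad_entry]
  exact integrable_finset_sum _ fun l _ => integrable_finset_sum _ fun k _ =>
    integrable_entry_prod hX hbdd (B k l) k i l j

lemma dot_matIntegral (A : Ω → Matrix (Fin K) (Fin K) ℝ)
    (hint : ∀ i j, Integrable (fun ω => A ω i j) μ) (xl xr : Fin K → ℝ) :
    xl ⬝ᵥ (matIntegral μ A *ᵥ xr) = ∫ ω, xl ⬝ᵥ (A ω *ᵥ xr) ∂μ := by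
  simp only [dotProduct, Matrix.mulVec, matIntegral, Matrix.of_apply]
  rw [eq_comm]
  calc ∫ ω, ∑ i, xl i * ∑ j, A ω i j * xr j ∂μ
      = ∑ i, ∫ ω, xl i * ∑ j, A ω i j * xr j ∂μ := integral_finset_sum _ (fun i _ =>
        (integrable_finset_sum _ fun j _ => (hint i j).mul_const (xr j)).const_mul (xl i))
    _ = ∑ i, xl i * ∑ j, (∫ ω, A ω i j ∂μ) * xr j := by
        refine Finset.sum_congr rfl fun i _ => ?_
        rw [integral_const_mul]
        congr 1
        rw [integral_finset_sum _ fun j _ => (hint i j).mul_const (xr j)]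
        exact Finset.sum_congr rfl fun j _ => integral_mul_const _ _

lemma matIntegral_psd (A : Ω → Matrix (Fin K) (Fin K) ℝ)
    (hint : ∀ i j, Integrable (fun ω => A ω i j) μ)
    (hpsd : ∀ᵐ ω ∂μ, (A ω).PosSemidef) : (matIntegral μ A).PosSemidef := by
  refine Matrix.PosSemidef.of_dotProduct_mulVec_nonneg ?_ ?_
  · show (matIntegral μ A)ᴴ = _
    ext i j
    simp only [Matrix.conjTranspose_apply, matIntegral, Matrix.of_apply, star_trivial]
    refine integral_congr_ae ?_
    filter_upwards [hpsd] with ω h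
    conv_lhs => rw [← h.1]
    simp [Matrix.conjTranspose_apply]
  · intro x
    rw [star_trivial, dot_matIntegral A hint x x]
    refine integral_nonneg_of_ae ?_
    filter_upwards [hpsd] with ω h
    have := h.dotProduct_mulVec_nonneg x
    rwa [star_trivial] at this

lemma matIntegral_quad_ident {X : ℕ → Ω → Matrix (Fin K) (Fin K) ℝ}
    (hmeas : ∀ i, Measurable (X i))
    (hident : ∀ i j, Measure.map (X i) μ = Measure.map (X j) μ) (s t : ℕ)
    (B : Matrix (Fin K) (Fin K) ℝ) :
    matIntegral μ (fun ω => (X s ω)ᵀ * B * X s ω)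
      = matIntegral μ (fun ω => (X t ω)ᵀ * B * X t ω) := by
  ext i j
  simp only [matIntegral, Matrix.of_apply]
  have hf : Measurable fun A : Matrix (Fin K) (Fin K) ℝ => (Aᵀ * B * A) i j := by
    simp only [quad_entry]
    refine Finset.measurable_sum _ fun l _ => Finset.measurable_sum _ fun k _ => ?_
    exact ((meas_entry measurable_id k i).mul_const _).mul (meas_entry measurable_id l j)
  calc ∫ ω, ((X s ω)ᵀ * B * X s ω) i j ∂μ
      = ∫ A, (Aᵀ * B * A) i j ∂(Measure.map (X s) μ) :=
        (integral_map (hmeas s).aemeasurable hf.aestronglyMeasurable).symm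
    _ = ∫ A, (Aᵀ * B * A) i j ∂(Measure.map (X t) μ) := by rw [hident s t]
    _ = _ := integral_map (hmeas t).aemeasurable hf.aestronglyMeasurable

lemma vec_step_real {X1 : Ω → Matrix (Fin K) (Fin K) ℝ} (hX : Measurable X1)
    {Cb : ℝ} (hbdd : ∀ᵐ ω ∂μ, ∀ a b, |X1 ω a b| ≤ Cb) (α : ℝ)
    (B : Matrix (Fin K) (Fin K) ℝ) (p : Fin K × Fin K) :
    ((α • (matIntegral μ (fun ω => X1 ω ⊗ₖ X1 ω))ᵀ) *ᵥ (fun q => B q.2 q.1)) p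
      = α * ((matIntegral μ (fun ω => (X1 ω)ᵀ * B * X1 ω)) p.2 p.1) := by
  obtain ⟨j, i⟩ := p
  simp only [Matrix.mulVec, dotProduct, Matrix.smul_apply, Matrix.transpose_apply,
    matIntegral, Matrix.of_apply, smul_eq_mul, Matrix.kroneckerMap_apply]
  rw [Fintype.sum_prod_type]
  simp only [quad_entry]
  rw [integral_finset_sum _ (fun l _ => integrable_finset_sum _ fun k _ =>
    integrable_entry_prod hX hbdd (B k l) k i l j)]
  rw [Finset.mul_sum]
  refine Finset.sum_congr rfl fun l _ => ?_
  rw [integral_finset_sum _ (fun k _ => integrable_entry_prod hX hbdd (B k l) k i l j),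
    Finset.mul_sum]
  refine Finset.sum_congr rfl fun k _ => ?_
  rw [show (fun ω => X1 ω k i * B k l * X1 ω l j) = fun ω => (X1 ω l j * X1 ω k i) * B k l
    from funext fun ω => by ring]
  rw [integral_mul_const]
  ring

end MT

/-- The contraction estimate at the heart of the proof of Theorem 2: if `Δ₁ = C*` and
`0 ⪯ Δ_{t+1} ⪯ α·E[X_tᵀ Δ_t X_t]` for i.i.d. bounded random matrices `X₁, X₂, …`, and
`M = α·E[X₁ ⊗ X₁]ᵀ = U D U⁻¹` with `D` diagonal, then
`‖Δ_{t+1}‖_F ≤ ‖U‖₂ · ‖U⁻¹ vec(C*)‖₂ · ρ(M)^t`. -/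
theorem statement13 {Ω : Type*} [MeasurableSpace Ω] (μ : Measure Ω) [IsProbabilityMeasure μ]
    (K : ℕ) (α : ℝ) (hα : 0 < α)
    (X : ℕ → Ω → Matrix (Fin K) (Fin K) ℝ)
    (hmeas : ∀ i, Measurable (X i))
    (hindep : iIndepFun X μ)
    (hident : ∀ i j, Measure.map (X i) μ = Measure.map (X j) μ)
    (Cb : ℝ) (hbdd : ∀ i, ∀ᵐ ω ∂μ, ∀ a b, |X i ω a b| ≤ Cb)
    (Cs : Matrix (Fin K) (Fin K) ℝ) (hCs : Cs.PosSemidef)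
    (Δ : ℕ → Matrix (Fin K) (Fin K) ℝ)
    (hΔ1 : Δ 1 = Cs)
    (hΔpos : ∀ t, 1 ≤ t → (Δ (t + 1)).PosSemidef)
    (hΔle : ∀ t, 1 ≤ t →
      (α • matIntegral μ (fun ω => (X t ω)ᵀ * Δ t * X t ω) - Δ (t + 1)).PosSemidef)
    (U D : Matrix (Fin K × Fin K) (Fin K × Fin K) ℂ)
    (hD : D.IsDiag) (hU : IsUnit U)
    (hdiag : (α • (matIntegral μ (fun ω => X 1 ω ⊗ₖ X 1 ω))ᵀ).map Complex.ofReal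
      = U * D * U⁻¹) :
    ∀ t : ℕ, 1 ≤ t →
      frobNorm (Δ (t + 1))
        ≤ specNorm U * l2Norm (U⁻¹ *ᵥ vecC Cs)
            * ((Finset.univ.sup fun p : Fin K × Fin K => ‖D p p‖₊ : NNReal) : ℝ) ^ t := by
  classical
  set ρ : ℝ := ((Finset.univ.sup fun p : Fin K × Fin K => ‖D p p‖₊ : NNReal) : ℝ) with hρ
  have hρ0 : 0 ≤ ρ := NNReal.coe_nonneg _
  have hDle : ∀ p : Fin K × Fin K, ‖D p p‖ ≤ ρ := fun p => by
    have := Finset.le_sup (f := fun p : Fin K × Fin K => ‖D p p‖₊) (Finset.mem_univ p)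
    exact_mod_cast this
  set T : Matrix (Fin K) (Fin K) ℝ → Matrix (Fin K) (Fin K) ℝ :=
    fun B => α • matIntegral μ (fun ω => (X 1 ω)ᵀ * B * X 1 ω) with hT
  -- T preserves positive semidefiniteness
  have hTpsd : ∀ s : ℕ, ∀ B : Matrix (Fin K) (Fin K) ℝ, B.PosSemidef →
      (α • matIntegral μ (fun ω => (X s ω)ᵀ * B * X s ω)).PosSemidef := by
    intro s B hB
    refine psd_smul' (matIntegral_psd _ (fun i j => integrable_quad (hmeas s) (hbdd s) B i j)
      (ae_of_all _ fun ω => ?_)) hα.le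
    have := hB.conjTranspose_mul_mul_same (X s ω)
    rwa [Matrix.conjTranspose_eq_transpose_of_trivial] at this
  have hBpsd : ∀ n : ℕ, (T^[n] Cs).PosSemidef := by
    intro n
    induction n with
    | zero => simpa using hCs
    | succ n ih =>
      rw [Function.iterate_succ_apply']
      exact hTpsd 1 _ ih
  -- domination: `T^[n+1] Cs - Δ (n+2)` is PSD
  have hdom : ∀ n : ℕ, (T^[n + 1] Cs - Δ (n + 2)).PosSemidef := by
    intro n
    induction n with
    | zero =>
      have h := hΔle 1 le_rfl
      rw [hΔ1] at h
      simpa [hT] using h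
    | succ n ih =>
      rw [Function.iterate_succ_apply']
      set Bn := T^[n + 1] Cs with hBn
      have hdiff : T Bn - α • matIntegral μ (fun ω => (X (n + 2) ω)ᵀ * Δ (n + 2) * X (n + 2) ω)
          = α • matIntegral μ (fun ω => (X (n + 2) ω)ᵀ * (Bn - Δ (n + 2)) * X (n + 2) ω) := by
        rw [hT]
        simp only []
        rw [matIntegral_quad_ident hmeas hident 1 (n + 2) Bn]
        rw [← smul_sub]
        congr 1
        ext i j
        simp only [Matrix.sub_apply, matIntegral, Matrix.of_apply]
        rw [← integral_sub (integrable_quad (hmeas (n + 2)) (hbdd (n + 2)) Bn i j)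
          (integrable_quad (hmeas (n + 2)) (hbdd (n + 2)) (Δ (n + 2)) i j)]
        refine integral_congr_ae (ae_of_all _ fun ω => ?_)
        simp [Matrix.mul_sub, Matrix.sub_mul, Matrix.sub_apply]
      have h2 : (T Bn
          - α • matIntegral μ (fun ω => (X (n + 2) ω)ᵀ * Δ (n + 2) * X (n + 2) ω)).PosSemidef := by
        rw [hdiff]
        exact hTpsd (n + 2) _ ih
      have h3 := hΔle (n + 2) (by omega)
      have h4 := psd_add' h2 h3
      rwa [sub_add_sub_cancel] at h4
  -- vectorization
  set Mc : Matrix (Fin K × Fin K) (Fin K × Fin K) ℂ :=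
    (α • (matIntegral μ (fun ω => X 1 ω ⊗ₖ X 1 ω))ᵀ).map Complex.ofReal with hMc
  have hvecstep : ∀ B : Matrix (Fin K) (Fin K) ℝ, vecC (T B) = Mc *ᵥ vecC B := by
    intro B
    funext p
    have hmr : (Mc *ᵥ vecC B) p
        = ((((α • (matIntegral μ (fun ω => X 1 ω ⊗ₖ X 1 ω))ᵀ) *ᵥ (fun q => B q.2 q.1)) p : ℝ)
            : ℂ) := by
      simp only [hMc, Matrix.mulVec, dotProduct, Matrix.map_apply, vecC]
      norm_cast
    rw [hmr, vec_step_real (hmeas 1) (hbdd 1) α B p]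
    simp [vecC, hT, Matrix.smul_apply, smul_eq_mul]
  have hvec : ∀ n : ℕ, vecC (T^[n] Cs) = (Mc ^ n) *ᵥ vecC Cs := by
    intro n
    induction n with
    | zero => simp [Matrix.one_mulVec]
    | succ n ih =>
      rw [Function.iterate_succ_apply', pow_succ', ← Matrix.mulVec_mulVec, ← ih]
      exact hvecstep _
  -- eigen-decomposition of the powers
  have hdet : IsUnit U.det := (Matrix.isUnit_iff_isUnit_det U).mp hU
  have hUiU : U⁻¹ * U = 1 := Matrix.nonsing_inv_mul U hdet
  have hUUi : U * U⁻¹ = 1 := Matrix.mul_nonsing_inv U hdet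
  have hMcUDU : Mc = U * D * U⁻¹ := hdiag
  have hpow : ∀ n : ℕ, Mc ^ n = U * D ^ n * U⁻¹ := by
    intro n
    induction n with
    | zero => simp [hUUi]
    | succ n ih =>
      rw [pow_succ, ih, hMcUDU]
      have h1 : U⁻¹ * (U * (D * U⁻¹)) = D * U⁻¹ := by
        rw [← Matrix.mul_assoc, hUiU, Matrix.one_mul]
      calc (U * D ^ n * U⁻¹) * (U * D * U⁻¹)
          = U * (D ^ n * (U⁻¹ * (U * (D * U⁻¹)))) := by simp only [Matrix.mul_assoc]
        _ = U * (D ^ n * (D * U⁻¹)) := by rw [h1]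
        _ = U * D ^ (n + 1) * U⁻¹ := by rw [pow_succ]; simp only [Matrix.mul_assoc]
  -- diagonal action
  have hDn : ∀ (n : ℕ) (w : Fin K × Fin K → ℂ),
      (D ^ n) *ᵥ w = fun p => (D p p) ^ n * w p := by
    intro n w
    conv_lhs => rw [← hD.diagonal_diag, Matrix.diagonal_pow]
    funext p
    rw [Matrix.mulVec_diagonal]
    simp [Matrix.diag_apply]
  -- the final chain of inequalities
  intro t ht
  obtain ⟨n, rfl⟩ : ∃ n, t = n + 1 := ⟨t - 1, by omega⟩
  set w : Fin K × Fin K → ℂ := U⁻¹ *ᵥ vecC Cs with hw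
  have hsp : 0 ≤ specNorm U := norm_nonneg _
  calc frobNorm (Δ (n + 1 + 1))
      ≤ frobNorm (T^[n + 1] Cs) := frob_mono (hΔpos (n + 1) ht) (hdom n)
    _ = l2Norm (vecC (T^[n + 1] Cs)) := frob_eq_l2_vecC _
    _ = l2Norm (U *ᵥ ((D ^ (n + 1)) *ᵥ w)) := by
        rw [hvec (n + 1), hpow (n + 1), ← Matrix.mulVec_mulVec, ← Matrix.mulVec_mulVec, hw]
    _ ≤ specNorm U * l2Norm ((D ^ (n + 1)) *ᵥ w) := l2_mulVec_le U _
    _ ≤ specNorm U * (ρ ^ (n + 1) * l2Norm w) := by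
        refine mul_le_mul_of_nonneg_left ?_ hsp
        rw [hDn (n + 1) w]
        refine l2_diag_le _ (ρ ^ (n + 1)) (pow_nonneg hρ0 _) (fun p => ?_) w
        rw [norm_pow]
        exact pow_le_pow_left₀ (norm_nonneg _) (hDle p) _
    _ = specNorm U * l2Norm w * ρ ^ (n + 1) := by ring
end

section
/- Let n, d, K ∈ ℕ, α = n/d, λ₀ > 0, X ∈ ℝ^{n×d}, y ∈ ℝ^{n×K}. For each row y^{[i]} ∈ ℝ^{1×K} of y, let θ ↦ l(θ; y^{[i]}) be a convex differentiable function on ℝ^{1×K}. Let V ∈ ℝ^{K×K} be symmetric positive definite and Q ∈ ℝ^{K×K} satisfy α·Q·V = λ₀·I_K − V. For γ ∈ ℝ^{1×K} and y-row y', let m(γ; y') be a minimizer of θ ↦ l(θ; y') + (1/2)(γ−θ)V(γ−θ)ᵀ, and set f(γ; y') := m(γ; y') − γ; for a matrix γ ∈ ℝ^{n×K}, f(γ; y) ∈ ℝ^{n×K} is defined row-wise, with i-th row f(γ^{[i]}; y^{[i]}). Suppose (γ, ω) ∈ ℝ^{n×K} × ℝ^{d×K} satisfies the AMP fixed-point equations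 γ = Xω − f(γ; y) and ω = Xᵀf(γ; y) − α·ω·Q. Then ω is the unique minimizer of the convex optimization ω ↦ Σ_{i=1}^{n} l(x_iᵀω; y^{[i]}) + (λ₀/2)‖ω‖_F², where x_iᵀ denotes the i-th row of X. -/
open Matrix Filter Topology

/-! The fixed-point equations say that the `i`-th row of `X ω` is the proximal point
`m(γᵢ; yᵢ)` and, using `α Q V = λ₀ I - V`, that `Xᵀ f(γ; y) V = λ₀ ω`. Minimality of the proximal
point and convexity of `l` make `-V f(γᵢ; yᵢ)` a subgradient of `l(·; yᵢ)` at `(X ω)ᵢ`; summed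
over `i` these give the subgradient `-λ₀ ω` of the loss at `ω`, which the gradient `λ₀ ω` of the
ridge term cancels. Strong convexity of the ridge term then makes `ω` the strict minimizer. -/

theorem ConvexOn.add_le_of_forall_le_add_sq {E : Type*} [AddCommGroup E] [Module ℝ E]
    {g : E → ℝ} (hg : ConvexOn ℝ Set.univ g) {m h : E} {c D : ℝ}
    (H : ∀ t : ℝ, 0 < t → t ≤ 1 → g m + t * c ≤ g (m + t • h) + t ^ 2 * D) :
    g m + c ≤ g (m + h) := by
  have hbound : ∀ t : ℝ, 0 < t → t ≤ 1 → g m + c ≤ g (m + h) + t * D := by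
    intro t ht ht1
    have hsegment : g (m + t • h) ≤ (1 - t) * g m + t * g (m + h) := by
      have hcomb : (1 - t) • m + t • (m + h) = m + t • h := by module
      simpa only [hcomb, smul_eq_mul] using
        hg.2 (Set.mem_univ m) (Set.mem_univ (m + h)) (sub_nonneg.mpr ht1) ht.le (by ring)
    have hscaled : t * (g m + c) ≤ t * (g (m + h) + t * D) := by
      linarith [H t ht ht1]
    exact le_of_mul_le_mul_left hscaled ht
  have hlim : Tendsto (fun t : ℝ => g (m + h) + t * D) (𝓝[>] 0) (𝓝 (g (m + h))) := by
    have : Continuous (fun t : ℝ => g (m + h) + t * D) := by fun_prop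
    simpa using (this.tendsto 0).mono_left nhdsWithin_le_nhds
  refine ge_of_tendsto hlim ?_
  filter_upwards [Ioc_mem_nhdsGT (zero_lt_one' ℝ)] with t ht using hbound t ht.1 ht.2

theorem Matrix.IsSymm.vecMul_dotProduct_sub_smul {R ι : Type*} [CommRing R] [Fintype ι]
    {V : Matrix ι ι R} (hV : V.IsSymm) (u h : ι → R) (t : R) :
    (u - t • h) ᵥ* V ⬝ᵥ (u - t • h)
      = u ᵥ* V ⬝ᵥ u - 2 * t * (u ᵥ* V ⬝ᵥ h) + t ^ 2 * (h ᵥ* V ⬝ᵥ h) := by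
  have hswap : h ᵥ* V ⬝ᵥ u = u ᵥ* V ⬝ᵥ h := by
    rw [← dotProduct_mulVec, dotProduct_comm, ← mulVec_transpose, hV.eq]
  simp only [sub_vecMul, smul_vecMul, sub_dotProduct, dotProduct_sub, smul_dotProduct,
    dotProduct_smul, hswap, smul_eq_mul]
  ring

/-- Subgradient form of the stationarity `∇g(m) = V (γ - m)` of the proximal point. -/
theorem ConvexOn.add_vecMul_dotProduct_le_of_isMinOn_prox {ι : Type*} [Fintype ι]
    {V : Matrix ι ι ℝ} (hV : V.IsSymm) {g : (ι → ℝ) → ℝ} (hg : ConvexOn ℝ Set.univ g)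
    {γ m : ι → ℝ}
    (hm : IsMinOn (fun θ => g θ + (1 / 2) * ((γ - θ) ᵥ* V ⬝ᵥ (γ - θ))) Set.univ m)
    (h : ι → ℝ) :
    g m + (γ - m) ᵥ* V ⬝ᵥ h ≤ g (m + h) := by
  refine hg.add_le_of_forall_le_add_sq (D := (1 / 2) * (h ᵥ* V ⬝ᵥ h)) fun t _ _ => ?_
  have hmin := isMinOn_univ_iff.mp hm (m + t • h)
  have hshift : γ - (m + t • h) = (γ - m) - t • h := by abel
  simp only [hshift, hV.vecMul_dotProduct_sub_smul] at hmin
  linarith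

theorem Matrix.sum_dotProduct_eq_trace_mul_transpose {R m n : Type*} [CommSemiring R]
    [Fintype m] [Fintype n] (C D : Matrix m n R) :
    ∑ i, C i ⬝ᵥ D i = trace (C * Dᵀ) := by
  simp [trace, mul_apply, dotProduct]

theorem Matrix.sum_dotProduct_mul_row {R l m n : Type*} [CommSemiring R] [Fintype l]
    [Fintype m] [Fintype n] (A : Matrix l n R) (X : Matrix l m R) (B : Matrix m n R) :
    ∑ i : l, A i ⬝ᵥ (X * B) i = ∑ j : m, (Xᵀ * A) j ⬝ᵥ B j := by
  rw [sum_dotProduct_eq_trace_mul_transpose, sum_dotProduct_eq_trace_mul_transpose,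
    transpose_mul, trace_mul_comm, Matrix.mul_assoc, trace_mul_comm, Matrix.mul_assoc]

theorem Matrix.two_mul_sum_dotProduct_sub_lt {m n : Type*} [Fintype m] [Fintype n]
    {a b : Matrix m n ℝ} (hab : b ≠ a) :
    2 * ∑ i, a i ⬝ᵥ (b - a) i < ∑ i, ∑ k, b i k ^ 2 - ∑ i, ∑ k, a i k ^ 2 := by
  obtain ⟨i, k, hik⟩ : ∃ i k, (b - a) i k ≠ 0 := by
    by_contra! hzero
    exact hab (sub_eq_zero.mp (Matrix.ext hzero))
  have hpos : 0 < ∑ i, ∑ k, (b - a) i k ^ 2 :=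
    Finset.sum_pos' (fun _ _ => Finset.sum_nonneg fun _ _ => sq_nonneg _)
      ⟨i, Finset.mem_univ i, Finset.sum_pos' (fun _ _ => sq_nonneg _)
        ⟨k, Finset.mem_univ k, by positivity⟩⟩
  have hexpand : ∑ i, ∑ k, b i k ^ 2 - ∑ i, ∑ k, a i k ^ 2 - 2 * ∑ i, a i ⬝ᵥ (b - a) i
      = ∑ i, ∑ k, (b - a) i k ^ 2 := by
    simp only [dotProduct, sub_apply, Finset.mul_sum, ← Finset.sum_sub_distrib]
    refine Finset.sum_congr rfl fun i _ => Finset.sum_congr rfl fun k _ => ?_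
    ring
  linarith

theorem statement15_general (n d K : ℕ) (lam₀ : ℝ) (hlam : 0 < lam₀)
    (X : Matrix (Fin n) (Fin d) ℝ) (y : Fin n → Fin K → ℝ)
    (l : (Fin K → ℝ) → (Fin K → ℝ) → ℝ)
    (hconv : ∀ y', ConvexOn ℝ Set.univ (l · y'))
    (V : Matrix (Fin K) (Fin K) ℝ) (hV : V.PosDef)
    (Q : Matrix (Fin K) (Fin K) ℝ)
    (hQ : ((n : ℝ) / d) • (Q * V) = lam₀ • (1 : Matrix (Fin K) (Fin K) ℝ) - V)
    (mprox : (Fin K → ℝ) → (Fin K → ℝ) → Fin K → ℝ)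
    (hm : ∀ γ y', IsMinOn (fun θ => l θ y' + (1 / 2) * ((γ - θ) ᵥ* V ⬝ᵥ (γ - θ)))
      Set.univ (mprox γ y'))
    (γ : Matrix (Fin n) (Fin K) ℝ) (ω : Matrix (Fin d) (Fin K) ℝ)
    (hfix1 : γ = X * ω - Matrix.of (fun i => mprox (γ i) (y i) - γ i))
    (hfix2 : ω = Xᵀ * Matrix.of (fun i => mprox (γ i) (y i) - γ i)
      - ((n : ℝ) / d) • (ω * Q)) :
    ∀ w : Matrix (Fin d) (Fin K) ℝ, w ≠ ω →
      (∑ i, l ((X * ω) i) (y i)) + (lam₀ / 2) * ∑ i, ∑ k, (ω i k) ^ 2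
        < (∑ i, l ((X * w) i) (y i)) + (lam₀ / 2) * ∑ i, ∑ k, (w i k) ^ 2 := by
  intro w hw
  set F : Matrix (Fin n) (Fin K) ℝ := Matrix.of fun i => mprox (γ i) (y i) - γ i with hF
  have hrow : ∀ i, (X * ω) i = mprox (γ i) (y i) := fun i => by
    rw [eq_add_of_sub_eq hfix1.symm]
    ext k
    simp [hF]
  have hstationary : Xᵀ * F * V = lam₀ • ω := by
    rw [eq_add_of_sub_eq hfix2.symm, Matrix.add_mul, Matrix.smul_mul, Matrix.mul_assoc,
      ← Matrix.mul_smul, hQ, Matrix.mul_sub, Matrix.mul_smul, Matrix.mul_one]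
    abel
  have hsubgrad : ∀ i, l ((X * ω) i) (y i) - F i ᵥ* V ⬝ᵥ (X * (w - ω)) i
      ≤ l ((X * w) i) (y i) := fun i => by
    have hres : γ i - mprox (γ i) (y i) = -F i := by
      ext k
      simp [hF]
    have hdir : mprox (γ i) (y i) + (X * (w - ω)) i = (X * w) i := by
      rw [Matrix.mul_sub, ← hrow i]
      exact add_sub_cancel _ _
    have hprox := (hconv (y i)).add_vecMul_dotProduct_le_of_isMinOn_prox
      (isHermitian_iff_isSymm.mp hV.isHermitian) (hm (γ i) (y i)) ((X * (w - ω)) i)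
    rw [hres, hdir, neg_vecMul, neg_dotProduct, ← hrow i] at hprox
    linarith
  have hcross : ∑ i, F i ᵥ* V ⬝ᵥ (X * (w - ω)) i = lam₀ * ∑ i, ω i ⬝ᵥ (w - ω) i := by
    simp only [← mul_apply_eq_vecMul, sum_dotProduct_mul_row, ← Matrix.mul_assoc,
      hstationary, Finset.mul_sum]
    exact Finset.sum_congr rfl fun p _ => smul_dotProduct lam₀ (ω p) ((w - ω) p)
  have hsum := Finset.sum_le_sum fun i (_ : i ∈ Finset.univ) => hsubgrad i
  rw [Finset.sum_sub_distrib, hcross] at hsum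
  have hridge := mul_lt_mul_of_pos_left (two_mul_sum_dotProduct_sub_lt hw) hlam
  linarith

/-- Remark 2 of the paper: a fixed point `(γ, ω)` of the AMP dynamics, with the
proximal-based nonlinearity `f(γ;y) = m(γ;y) − γ` and `α·Q·V = λ₀·I − V`, coincides with
the unique minimizer of the ridge-regularized convex optimization
`ω ↦ Σᵢ l(xᵢᵀω; y⁽ⁱ⁾) + (λ₀/2)‖ω‖_F²`. -/
theorem statement15 (n d K : ℕ) (hd : 0 < d) (lam₀ : ℝ) (hlam : 0 < lam₀)
    (X : Matrix (Fin n) (Fin d) ℝ) (y : Fin n → Fin K → ℝ)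
    (l : (Fin K → ℝ) → (Fin K → ℝ) → ℝ)
    (hconv : ∀ y', ConvexOn ℝ Set.univ (l · y'))
    (hdiff : ∀ y', Differentiable ℝ (l · y'))
    (V : Matrix (Fin K) (Fin K) ℝ) (hV : V.PosDef)
    (Q : Matrix (Fin K) (Fin K) ℝ)
    (hQ : ((n : ℝ) / d) • (Q * V) = lam₀ • (1 : Matrix (Fin K) (Fin K) ℝ) - V)
    (mprox : (Fin K → ℝ) → (Fin K → ℝ) → Fin K → ℝ)
    (hm : ∀ γ y', IsMinOn (fun θ => l θ y' + (1 / 2) * ((γ - θ) ᵥ* V ⬝ᵥ (γ - θ)))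
      Set.univ (mprox γ y'))
    (γ : Matrix (Fin n) (Fin K) ℝ) (ω : Matrix (Fin d) (Fin K) ℝ)
    (hfix1 : γ = X * ω - Matrix.of (fun i => mprox (γ i) (y i) - γ i))
    (hfix2 : ω = Xᵀ * Matrix.of (fun i => mprox (γ i) (y i) - γ i)
      - ((n : ℝ) / d) • (ω * Q)) :
    ∀ w : Matrix (Fin d) (Fin K) ℝ, w ≠ ω →
      (∑ i, l ((X * ω) i) (y i)) + (lam₀ / 2) * ∑ i, ∑ k, (ω i k) ^ 2
        < (∑ i, l ((X * w) i) (y i)) + (lam₀ / 2) * ∑ i, ∑ k, (w i k) ^ 2 :=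
  statement15_general n d K lam₀ hlam X y l hconv V hV Q hQ mprox hm γ ω hfix1 hfix2
end
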